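/- Let X and Y be Banach spaces such that X has property (R_p) and Y has property (R_q) for some 1 < p, q < ∞ with 1/p + 1/q ≥ 1. Then the pair (X, Y) has property (AW): whenever W1 ⊆ X and W2 ⊆ Y are sets such that {x ⊗ y : x ∈ W1, y ∈ W2} is weakly precompact in X ⊗̂π Y, either W1 or W2 is relatively norm compact. -/

import Mathlib

open Filter Topology NormedSpace
open scoped ENNReal NNReal

/-- `Z`, together with the continuous bilinear map `m`, is (a realization of) the projective
tensor product `X ⊗̂π Y`: the span of elementary tensors is dense, and every continuous bilinear
map into a Banach space lifts to a continuous linear map on `Z` with the same norm. -/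
structure IsProjTensorProduct (X Y Z : Type*) [NormedAddCommGroup X] [NormedSpace ℝ X]
    [NormedAddCommGroup Y] [NormedSpace ℝ Y] [NormedAddCommGroup Z] [NormedSpace ℝ Z]
    (m : X →L[ℝ] Y →L[ℝ] Z) : Prop where
  dense_span : Dense (Submodule.span ℝ {z : Z | ∃ x y, m x y = z} : Set Z)
  lift : ∀ (W : Type) [NormedAddCommGroup W] [NormedSpace ℝ W] [CompleteSpace W]
    (B : X →L[ℝ] Y →L[ℝ] W), ∃ T : Z →L[ℝ] W, ‖T‖ = ‖B‖ ∧ ∀ x y, T (m x y) = B x y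

/-- A set is relatively weakly compact if its closure in the weak topology is weakly compact. -/
def RelWeakCompact (X : Type*) [SeminormedAddCommGroup X] [NormedSpace ℝ X] (A : Set X) : Prop :=
  IsCompact (closure ((toWeakSpace ℝ X) '' A))

/-- A set is relatively norm compact if its norm closure is compact. -/
def RelNormCompact (X : Type*) [SeminormedAddCommGroup X] [NormedSpace ℝ X] (A : Set X) : Prop :=
  IsCompact (closure A)

/-- A sequence is weakly Cauchy if every continuous functional sends it to a convergent sequence. -/
def WeaklyCauchySeq {X : Type*} [SeminormedAddCommGroup X] [NormedSpace ℝ X] (x : ℕ → X) : Prop :=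
  ∀ f : X →L[ℝ] ℝ, ∃ l : ℝ, Tendsto (fun n => f (x n)) atTop (nhds l)

/-- A sequence is weakly null if it converges to `0` in the weak topology. -/
def WeaklyNullSeq {X : Type*} [SeminormedAddCommGroup X] [NormedSpace ℝ X] (x : ℕ → X) : Prop :=
  ∀ f : X →L[ℝ] ℝ, Tendsto (fun n => f (x n)) atTop (nhds 0)

/-- A set is weakly precompact if every sequence in it has a weakly Cauchy subsequence. -/
def WeaklyPrecompact {X : Type*} [SeminormedAddCommGroup X] [NormedSpace ℝ X] (A : Set X) : Prop :=
  ∀ x : ℕ → X, (∀ n, x n ∈ A) → ∃ φ : ℕ → ℕ, StrictMono φ ∧ WeaklyCauchySeq (x ∘ φ)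

/-- A (weakly) compact operator maps the closed unit ball to a relatively (weakly) compact set. -/
def WeaklyCompactOp {X Y : Type*} [SeminormedAddCommGroup X] [NormedSpace ℝ X]
    [SeminormedAddCommGroup Y] [NormedSpace ℝ Y] (T : X →L[ℝ] Y) : Prop :=
  RelWeakCompact Y (T '' Metric.closedBall 0 1)

/-- A sequence is seminormalized if `0 < inf ‖xₙ‖ ≤ sup ‖xₙ‖ < ∞`. -/
def Seminormalized {X : Type*} [NormedAddCommGroup X] (x : ℕ → X) : Prop :=
  ∃ a b : ℝ, 0 < a ∧ ∀ n, a ≤ ‖x n‖ ∧ ‖x n‖ ≤ b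

/-- A sequence `z` in `X` is (a basic sequence) equivalent to the unit vector basis of `ℓp`. -/
def EquivLpBasis (p : ℝ≥0∞) [Fact (1 ≤ p)] {X : Type*} [NormedAddCommGroup X]
    [NormedSpace ℝ X] (z : ℕ → X) : Prop :=
  ∃ C C' : ℝ, 0 < C ∧ 0 < C' ∧ ∀ (s : Finset ℕ) (a : ℕ → ℝ),
    C * ‖∑ n ∈ s, a n • (lp.single p n (1 : ℝ) : lp (fun _ : ℕ => ℝ) p)‖ ≤
        ‖∑ n ∈ s, a n • z n‖ ∧
      ‖∑ n ∈ s, a n • z n‖ ≤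
        C' * ‖∑ n ∈ s, a n • (lp.single p n (1 : ℝ) : lp (fun _ : ℕ => ℝ) p)‖

/-- The closed linear span of the sequence `z` is complemented in `X`. -/
def SpanComplemented {X : Type*} [NormedAddCommGroup X] [NormedSpace ℝ X] (z : ℕ → X) : Prop :=
  ∃ P : X →L[ℝ] X, P.comp P = P ∧
    LinearMap.range P.toLinearMap = (Submodule.span ℝ (Set.range z)).topologicalClosure

/-- Property `(P_p)`: every seminormalized weakly null sequence admits a subsequence which is a
basic sequence equivalent to the unit vector basis of `ℓp` with complemented closed linear span. -/
def PropP (p : ℝ≥0∞) [Fact (1 ≤ p)] (X : Type*) [NormedAddCommGroup X]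
    [NormedSpace ℝ X] : Prop :=
  ∀ x : ℕ → X, Seminormalized x → WeaklyNullSeq x →
    ∃ φ : ℕ → ℕ, StrictMono φ ∧ EquivLpBasis p (x ∘ φ) ∧ SpanComplemented (x ∘ φ)

/-- Property `(R_p)`: for every relatively weakly compact set `A` which is not relatively norm
compact there is an operator `u : X → ℓp` with `u(A)` not relatively norm compact. -/
def PropR (p : ℝ≥0∞) [Fact (1 ≤ p)] (X : Type*) [NormedAddCommGroup X]
    [NormedSpace ℝ X] : Prop :=
  ∀ A : Set X, RelWeakCompact X A → ¬ RelNormCompact X A →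
    ∃ u : X →L[ℝ] lp (fun _ : ℕ => ℝ) p, ¬ RelNormCompact _ (u '' A)

/-
Suppose neither `W1` nor `W2` is relatively compact. Tensoring with a fixed nonzero vector of the
other set shows that both sets are weakly precompact, so differences along a separated weakly
Cauchy sequence give weakly null sequences `zₙ ∈ W1 - W1`, `wₙ ∈ W2 - W2` bounded away from `0`,
and `(R_p)`, `(R_q)` provide operators `u : X → ℓp`, `v : Y → ℓq` keeping them so.
A gliding hump produces block functionals `fⱼ` on `ℓp` and `gⱼ` on `ℓq`, of norm at most one,
that are almost biorthogonal to subsequences of `u zₙ` and `v wₙ`. Because `1/p + 1/q ≥ 1`,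
Hölder's inequality makes `∑ⱼ εⱼ fⱼ(u x) gⱼ(v y)` a bounded bilinear form for every choice of
signs `εⱼ = ±1`, and its linearization `T` on `X ⊗̂π Y` has `εⱼ T(zⱼ ⊗ wⱼ) ≥ ρ > 0`. But
`zⱼ ⊗ wⱼ` lies in the weakly precompact set `(S + S) - (S + S)`, `S = W1 ⊗ W2`, so along a weakly
Cauchy subsequence `T(zⱼ ⊗ wⱼ)` converges, which is impossible once the signs alternate along
that subsequence.
-/

namespace Real

lemma sum_rpow_le_rpow_sum {ι : Type*} (s : Finset ι) {x : ι → ℝ} (hx : ∀ i ∈ s, 0 ≤ x i)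
    {r : ℝ} (hr : 1 ≤ r) : ∑ i ∈ s, x i ^ r ≤ (∑ i ∈ s, x i) ^ r := by
  classical
  induction s using Finset.induction_on with
  | empty => simp [zero_rpow (by linarith : r ≠ 0)]
  | insert a s ha ih =>
    have hs : ∀ i ∈ s, 0 ≤ x i := fun i hi => hx i (Finset.mem_insert_of_mem hi)
    rw [Finset.sum_insert ha, Finset.sum_insert ha]
    calc x a ^ r + ∑ i ∈ s, x i ^ r ≤ x a ^ r + (∑ i ∈ s, x i) ^ r := by gcongr; exact ih hs
      _ ≤ (x a + ∑ i ∈ s, x i) ^ r :=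
        add_rpow_le_rpow_add (hx a (Finset.mem_insert_self a s)) (Finset.sum_nonneg hs) hr

lemma sum_mul_le_of_sum_rpow_le {ι : Type*} (s : Finset ι) {p q : ℝ} (hp : 1 < p) (hq : 0 < q)
    (hpq : 1 ≤ 1 / p + 1 / q) {a d : ι → ℝ} (ha : ∀ i ∈ s, 0 ≤ a i) (hd : ∀ i ∈ s, 0 ≤ d i)
    {A D : ℝ} (hA : 0 ≤ A) (hD : 0 ≤ D)
    (hAa : ∑ i ∈ s, a i ^ p ≤ A ^ p) (hDd : ∑ i ∈ s, d i ^ q ≤ D ^ q) :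
    ∑ i ∈ s, a i * d i ≤ A * D := by
  -- Hölder for the conjugate exponent `p'`; since `q ≤ p'`, the `ℓ^q` bound on `d` controls
  -- its `ℓ^p'` sum.
  have hconj := HolderConjugate.conjExponent hp
  set p' := p.conjExponent
  have hqp' : q ≤ p' := by
    have : p'⁻¹ ≤ q⁻¹ := by
      have := hconj.inv_add_inv_eq_one
      simp only [one_div] at hpq
      linarith
    exact (inv_le_inv₀ hconj.symm.pos hq).mp this
  have hdp' : ∑ i ∈ s, d i ^ p' ≤ D ^ p' := by
    have hdq : ∀ i ∈ s, 0 ≤ d i ^ q := fun i hi => rpow_nonneg (hd i hi) q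
    calc ∑ i ∈ s, d i ^ p' = ∑ i ∈ s, (d i ^ q) ^ (p' / q) := by
          refine Finset.sum_congr rfl fun i hi => ?_
          rw [← rpow_mul (hd i hi), mul_div_cancel₀ _ hq.ne']
      _ ≤ (∑ i ∈ s, d i ^ q) ^ (p' / q) :=
          sum_rpow_le_rpow_sum s hdq ((one_le_div hq).mpr hqp')
      _ ≤ (D ^ q) ^ (p' / q) := by
          gcongr
          · exact Finset.sum_nonneg hdq
          · exact div_nonneg hconj.symm.pos.le hq.le
      _ = D ^ p' := by rw [← rpow_mul hD, mul_div_cancel₀ _ hq.ne']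
  calc ∑ i ∈ s, a i * d i
      ≤ (∑ i ∈ s, a i ^ p) ^ (1 / p) * (∑ i ∈ s, d i ^ p') ^ (1 / p') :=
        inner_le_Lp_mul_Lq_of_nonneg s hconj ha hd
    _ ≤ A * D := by
        simp only [one_div]
        gcongr
        · exact rpow_nonneg (Finset.sum_nonneg fun i hi => rpow_nonneg (hd i hi) p') _
        · exact (rpow_inv_le_iff_of_pos (Finset.sum_nonneg fun i hi => rpow_nonneg (ha i hi) p)
            hA (by linarith)).mpr hAa
        · exact (rpow_inv_le_iff_of_pos (Finset.sum_nonneg fun i hi => rpow_nonneg (hd i hi) p')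
            hD hconj.symm.pos).mpr hdp'

end Real

lemma HasSum.abs_sub_le {ι : Type*} {a : ι → ℝ} {S : ℝ} (h : HasSum a S)
    (j : ι) {K : ℝ} (hK : ∀ s : Finset ι, j ∉ s → ∑ t ∈ s, |a t| ≤ K) :
    |S - a j| ≤ K := by
  classical
  have h' : HasSum (Function.update a j 0) (S - a j) := by
    simpa [sub_eq_neg_add] using h.update j 0
  refine le_of_tendsto' h'.abs fun s => ?_
  calc |∑ t ∈ s, Function.update a j 0 t| ≤ ∑ t ∈ s, |Function.update a j 0 t| :=
        Finset.abs_sum_le_sum_abs _ _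
    _ = ∑ t ∈ s.erase j, |a t| := by
        rw [← Finset.sum_erase s (a := j) (by simp)]
        exact Finset.sum_congr rfl fun t ht => by
          rw [Function.update_of_ne (Finset.ne_of_mem_erase ht)]
    _ ≤ K := hK _ (Finset.notMem_erase j s)

lemma exists_bilinear_hasSum_mul {ι E F : Type*} [NormedAddCommGroup E]
    [NormedSpace ℝ E] [NormedAddCommGroup F] [NormedSpace ℝ F]
    (f : ι → StrongDual ℝ E) (g : ι → StrongDual ℝ F) {C : ℝ}
    (hC : ∀ x y (s : Finset ι), ∑ j ∈ s, |f j x| * |g j y| ≤ C * ‖x‖ * ‖y‖) :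
    ∃ B : E →L[ℝ] F →L[ℝ] ℝ, ∀ x y, HasSum (fun j => f j x * g j y) (B x y) := by
  have habs : ∀ x y, Summable fun j => ‖f j x * g j y‖ := fun x y =>
    summable_of_sum_le (fun _ => norm_nonneg _) fun s => by
      simpa only [Real.norm_eq_abs, abs_mul] using hC x y s
  have hsum : ∀ x y, Summable fun j => f j x * g j y := fun x y => (habs x y).of_norm
  refine ⟨LinearMap.mkContinuous₂ (LinearMap.mk₂ ℝ (fun x y => ∑' j, f j x * g j y)
    (fun x x' y => ?_) (fun c x y => ?_) (fun x y y' => ?_) (fun c x y => ?_)) C fun x y => ?_,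
    fun x y => (hsum x y).hasSum⟩
  · simp only [map_add, add_mul]
    exact (hsum x y).tsum_add (hsum x' y)
  · simp only [map_smul, smul_eq_mul, mul_assoc, tsum_mul_left]
  · simp only [map_add, mul_add]
    exact (hsum x y).tsum_add (hsum x y')
  · simp only [map_smul, smul_eq_mul, mul_left_comm _ c, tsum_mul_left]
  · refine (norm_tsum_le_tsum_norm (habs x y)).trans ?_
    refine (habs x y).tsum_le_of_sum_le fun s => ?_
    simpa only [Real.norm_eq_abs, abs_mul] using hC x y s

lemma not_tendsto_of_le_neg_one_pow_mul {x : ℕ → ℝ} {ρ : ℝ} (hρ : 0 < ρ)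
    (hx : ∀ i, ρ ≤ (-1) ^ i * x i) (l : ℝ) : ¬ Tendsto x atTop (𝓝 l) := by
  intro hl
  have hle : ρ ≤ l := ge_of_tendsto'
    (hl.comp (tendsto_atTop_mono (fun i => show i ≤ 2 * i by omega) tendsto_id))
    fun i => by simpa [pow_mul] using hx (2 * i)
  have hge : l ≤ -ρ := le_of_tendsto'
    (hl.comp (tendsto_atTop_mono (fun i => show i ≤ 2 * i + 1 by omega) tendsto_id))
    fun i => le_neg_of_le_neg (by simpa [pow_succ, pow_mul] using hx (2 * i + 1))
  linarith

lemma ENNReal.one_le_inv_add_inv_toReal {p q : ℝ≥0∞} (hp : p ≠ 0) (hq : q ≠ 0)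
    (hpq : 1 ≤ 1 / p + 1 / q) : 1 ≤ 1 / p.toReal + 1 / q.toReal := by
  have := ENNReal.toReal_mono (by simp [hp, hq]) hpq
  simpa [ENNReal.toReal_add, ENNReal.toReal_inv, hp, hq] using this

lemma exists_separated_seq_of_not_isCompact_closure {E : Type*} [MetricSpace E] [CompleteSpace E]
    {A : Set E} (hA : ¬ IsCompact (closure A)) :
    ∃ ε > 0, ∃ x : ℕ → E, (∀ n, x n ∈ A) ∧ ∀ m n, m < n → ε ≤ dist (x m) (x n) := by
  have hA' : ¬ TotallyBounded A := fun h => hA (h.closure.isCompact_of_isClosed isClosed_closure)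
  rw [Metric.totallyBounded_iff] at hA'
  push Not at hA'
  obtain ⟨ε, hε, hcover⟩ := hA'
  refine ⟨ε, hε, exists_seq_of_forall_finset_exists (· ∈ A) (fun a b => ε ≤ dist a b)
    fun s _ => ?_⟩
  by_contra! h
  refine hcover s s.finite_toSet fun y hy => ?_
  obtain ⟨x, hx, hxy⟩ := h y hy
  exact Set.mem_biUnion hx (by rwa [Metric.mem_ball, dist_comm])

lemma exists_strictMono_le_norm_of_not_relNormCompact_range {E : Type*} [NormedAddCommGroup E]
    [NormedSpace ℝ E] {x : ℕ → E} (hx : ¬ RelNormCompact E (Set.range x)) :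
    ∃ δ > 0, ∃ φ : ℕ → ℕ, StrictMono φ ∧ ∀ n, δ ≤ ‖x (φ n)‖ := by
  by_contra! h
  have hlim : Tendsto x atTop (𝓝 0) := by
    refine NormedAddGroup.tendsto_nhds_zero.mpr fun δ hδ => ?_
    by_contra hfreq
    obtain ⟨φ, hφ, hφδ⟩ := extraction_of_frequently_atTop (Filter.not_eventually.mp hfreq)
    obtain ⟨n, hn⟩ := h δ hδ φ hφ
    exact hφδ n hn
  exact hx (hlim.isCompact_insert_range.of_isClosed_subset isClosed_closure
    (closure_minimal (Set.subset_insert _ _) hlim.isCompact_insert_range.isClosed))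

lemma exists_mem_ne_zero_of_not_relNormCompact {X : Type*} [NormedAddCommGroup X]
    [NormedSpace ℝ X] {W : Set X} (hW : ¬ RelNormCompact X W) : ∃ x ∈ W, x ≠ 0 := by
  by_contra! h
  exact hW ((Set.subsingleton_of_subset_singleton h).closure.isCompact)

section WeakSequences

variable {X Y : Type*} [NormedAddCommGroup X] [NormedSpace ℝ X]
  [NormedAddCommGroup Y] [NormedSpace ℝ Y]

lemma WeaklyCauchySeq.add {x y : ℕ → X} (hx : WeaklyCauchySeq x) (hy : WeaklyCauchySeq y) :
    WeaklyCauchySeq (x + y) := fun f => by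
  obtain ⟨l, hl⟩ := hx f
  obtain ⟨l', hl'⟩ := hy f
  exact ⟨l + l', by simpa only [Pi.add_apply, map_add] using hl.add hl'⟩

lemma WeaklyCauchySeq.sub {x y : ℕ → X} (hx : WeaklyCauchySeq x) (hy : WeaklyCauchySeq y) :
    WeaklyCauchySeq (x - y) := fun f => by
  obtain ⟨l, hl⟩ := hx f
  obtain ⟨l', hl'⟩ := hy f
  exact ⟨l - l', by simpa only [Pi.sub_apply, map_sub] using hl.sub hl'⟩

lemma WeaklyCauchySeq.comp_tendsto {x : ℕ → X} (hx : WeaklyCauchySeq x) {φ : ℕ → ℕ}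
    (hφ : Tendsto φ atTop atTop) : WeaklyCauchySeq (x ∘ φ) :=
  fun f => (hx f).imp fun _ hl => hl.comp hφ

lemma WeaklyCauchySeq.weaklyNullSeq_sub {x : ℕ → X} (hx : WeaklyCauchySeq x) {φ ψ : ℕ → ℕ}
    (hφ : Tendsto φ atTop atTop) (hψ : Tendsto ψ atTop atTop) :
    WeaklyNullSeq (x ∘ φ - x ∘ ψ) := fun f => by
  obtain ⟨l, hl⟩ := hx f
  simpa only [Pi.sub_apply, Function.comp_apply, map_sub, sub_self] using
    (hl.comp hφ).sub (hl.comp hψ)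

lemma WeaklyNullSeq.comp_tendsto {x : ℕ → X} (hx : WeaklyNullSeq x) {φ : ℕ → ℕ}
    (hφ : Tendsto φ atTop atTop) : WeaklyNullSeq (x ∘ φ) :=
  fun f => (hx f).comp hφ

lemma WeaklyNullSeq.map {x : ℕ → X} (hx : WeaklyNullSeq x) (u : X →L[ℝ] Y) :
    WeaklyNullSeq (u ∘ x) :=
  fun f => hx (f.comp u)

lemma WeaklyNullSeq.exists_norm_le {x : ℕ → X} (hx : WeaklyNullSeq x) :
    ∃ C, ∀ n, ‖x n‖ ≤ C := by
  have hbdd : ∀ f : StrongDual ℝ X, ∃ C, ∀ n, ‖inclusionInDoubleDual ℝ X (x n) f‖ ≤ C :=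
    fun f => by
      obtain ⟨C, hC⟩ := (hx f).norm.bddAbove_range
      exact ⟨C, fun n => hC (Set.mem_range_self n)⟩
  obtain ⟨C, hC⟩ := banach_steinhaus hbdd
  exact ⟨C, fun n => (inclusionInDoubleDualLi ℝ (E := X)).norm_map (x n) ▸ hC n⟩

lemma WeaklyNullSeq.relWeakCompact_range {x : ℕ → X} (hx : WeaklyNullSeq x) :
    RelWeakCompact X (Set.range x) := by
  have hlim : Tendsto (toWeakSpace ℝ X ∘ x) atTop (𝓝 (toWeakSpace ℝ X 0)) := by
    refine (WeakBilin.tendsto_iff_forall_eval_tendsto (topDualPairing ℝ X).flip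
      (fun _ _ h => SeparatingDual.eq_iff_forall_dual_eq.mpr fun g =>
        LinearMap.congr_fun h g)).mpr fun f => ?_
    convert hx f using 2
    · rfl
    · exact map_zero f
  refine hlim.isCompact_insert_range.of_isClosed_subset isClosed_closure
    (closure_minimal ?_ hlim.isCompact_insert_range.isClosed)
  rw [← Set.range_comp]
  exact Set.subset_insert _ _

lemma WeaklyNullSeq.not_relNormCompact_range {x : ℕ → X} (hx : WeaklyNullSeq x) {δ : ℝ}
    (hδ : 0 < δ) (hxδ : ∀ n, δ ≤ ‖x n‖) : ¬ RelNormCompact X (Set.range x) := by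
  intro hc
  obtain ⟨l, -, φ, hφ, hlim⟩ := hc.tendsto_subseq fun n => subset_closure (Set.mem_range_self n)
  have hl : l = 0 := SeparatingDual.eq_zero_of_forall_dual_eq_zero fun f =>
    tendsto_nhds_unique ((f.continuous.tendsto l).comp hlim) ((hx f).comp hφ.tendsto_atTop)
  subst hl
  obtain ⟨n, hn⟩ := (hlim.norm.eventually_lt_const (by simpa using hδ)).exists
  exact (hxδ (φ n)).not_gt (by simpa using hn)

end WeakSequences

section WeaklyPrecompactSets

variable {X Y Z : Type*} [NormedAddCommGroup X] [NormedSpace ℝ X]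
  [NormedAddCommGroup Y] [NormedSpace ℝ Y] [NormedAddCommGroup Z] [NormedSpace ℝ Z]

lemma WeaklyPrecompact.mono {A B : Set X} (hB : WeaklyPrecompact B) (hAB : A ⊆ B) :
    WeaklyPrecompact A :=
  fun x hx => hB x fun n => hAB (hx n)

lemma WeaklyPrecompact.image2 {f : X → Y → Z}
    (hf : ∀ x y, WeaklyCauchySeq x → WeaklyCauchySeq y → WeaklyCauchySeq fun n => f (x n) (y n))
    {A : Set X} {B : Set Y} (hA : WeaklyPrecompact A) (hB : WeaklyPrecompact B) :
    WeaklyPrecompact (Set.image2 f A B) := by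
  intro z hz
  choose x hx y hy hxy using hz
  obtain ⟨φ, hφ, hxφ⟩ := hA x hx
  obtain ⟨φ', hφ', hyφ⟩ := hB (y ∘ φ) fun n => hy _
  refine ⟨φ ∘ φ', hφ.comp hφ', ?_⟩
  have := hf _ _ (hxφ.comp_tendsto hφ'.tendsto_atTop) hyφ
  simp only [Function.comp_apply, hxy] at this
  exact this

open scoped Pointwise in
lemma WeaklyPrecompact.add {A B : Set X} (hA : WeaklyPrecompact A) (hB : WeaklyPrecompact B) :
    WeaklyPrecompact (A + B) := by
  rw [← Set.image2_add]
  exact hA.image2 (fun _ _ => WeaklyCauchySeq.add) hB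

open scoped Pointwise in
lemma WeaklyPrecompact.sub {A B : Set X} (hA : WeaklyPrecompact A) (hB : WeaklyPrecompact B) :
    WeaklyPrecompact (A - B) := by
  rw [← Set.image2_sub]
  exact hA.image2 (fun _ _ => WeaklyCauchySeq.sub) hB

lemma WeaklyPrecompact.of_image {L : X → Z}
    (hL : ∀ f : StrongDual ℝ X, ∃ T : StrongDual ℝ Z, ∀ x, T (L x) = f x) {A : Set X}
    (hA : WeaklyPrecompact (L '' A)) : WeaklyPrecompact A := by
  intro x hx
  obtain ⟨φ, hφ, hLx⟩ := hA (L ∘ x) fun n => Set.mem_image_of_mem L (hx n)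
  refine ⟨φ, hφ, fun f => ?_⟩
  obtain ⟨T, hT⟩ := hL f
  simpa only [Function.comp_apply, hT] using hLx T

open scoped Pointwise in
lemma WeaklyPrecompact.image2_sub_sub {m : X →L[ℝ] Y →L[ℝ] Z} {W₁ : Set X} {W₂ : Set Y}
    (h : WeaklyPrecompact (Set.image2 (fun x y => m x y) W₁ W₂)) :
    WeaklyPrecompact (Set.image2 (fun x y => m x y) (W₁ - W₁) (W₂ - W₂)) := by
  refine ((h.add h).sub (h.add h)).mono ?_
  rintro - ⟨-, ⟨a, ha, b, hb, rfl⟩, -, ⟨c, hc, d, hd, rfl⟩, rfl⟩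
  have : m (a - b) (c - d) = (m a c + m b d) - (m a d + m b c) := by
    simp only [map_sub, sub_apply]
    abel
  change m (a - b) (c - d) ∈ _
  rw [this]
  exact Set.sub_mem_sub
    (Set.add_mem_add (Set.mem_image2_of_mem ha hc) (Set.mem_image2_of_mem hb hd))
    (Set.add_mem_add (Set.mem_image2_of_mem ha hd) (Set.mem_image2_of_mem hb hc))

namespace IsProjTensorProduct

variable {m : X →L[ℝ] Y →L[ℝ] Z}

lemma flip (hm : IsProjTensorProduct X Y Z m) : IsProjTensorProduct Y X Z m.flip where
  dense_span := by
    convert hm.dense_span using 5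
    exact exists_comm
  lift W _ _ _ B := by
    obtain ⟨T, hT, hTB⟩ := hm.lift W B.flip
    exact ⟨T, hT.trans B.opNorm_flip, fun y x => hTB x y⟩

lemma exists_dual_apply_left (hm : IsProjTensorProduct X Y Z m) {y₀ : Y} (hy₀ : y₀ ≠ 0)
    (f : StrongDual ℝ X) : ∃ T : StrongDual ℝ Z, ∀ x, T (m x y₀) = f x := by
  obtain ⟨g, hg⟩ := SeparatingDual.exists_eq_one (R := ℝ) hy₀
  obtain ⟨T, -, hT⟩ := hm.lift ℝ (f.smulRight g)
  exact ⟨T, fun x => by simp [hT, hg]⟩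

lemma weaklyPrecompact_left (hm : IsProjTensorProduct X Y Z m) {W₁ : Set X} {W₂ : Set Y}
    (h : WeaklyPrecompact (Set.image2 (fun x y => m x y) W₁ W₂)) {y₀ : Y} (hy₀ : y₀ ∈ W₂)
    (hy₀' : y₀ ≠ 0) : WeaklyPrecompact W₁ :=
  WeaklyPrecompact.of_image (hm.exists_dual_apply_left hy₀') <|
    h.mono (Set.image_subset_iff.mpr fun _ hx => Set.mem_image2_of_mem hx hy₀)

end IsProjTensorProduct

end WeaklyPrecompactSets

local notation "ℓ[" p "]" => lp (fun _ : ℕ => ℝ) p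

section LpBlocks

variable {p : ℝ≥0∞} [Fact (1 ≤ p)]

lemma WeaklyNullSeq.tendsto_lp_apply {x : ℕ → ℓ[p]} (hx : WeaklyNullSeq x) (k : ℕ) :
    Tendsto (fun n => x n k) atTop (𝓝 0) :=
  hx (lp.evalCLM ℝ (fun _ : ℕ => ℝ) p k)

variable (p) in
noncomputable def blockProj (s : Finset ℕ) : ℓ[p] →L[ℝ] ℓ[p] :=
  ∑ k ∈ s, (lp.singleContinuousLinearMap ℝ (fun _ : ℕ => ℝ) p k).comp
    (lp.evalCLM ℝ (fun _ : ℕ => ℝ) p k)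

lemma norm_blockProj_rpow (hp : 0 < p.toReal) (s : Finset ℕ) (w : ℓ[p]) :
    ‖blockProj p s w‖ ^ p.toReal = ∑ k ∈ s, ‖w k‖ ^ p.toReal := by
  have : blockProj p s w = ∑ k ∈ s, lp.single p k (w k) := by
    simp [blockProj, lp.evalCLM]
  rw [this]
  exact lp.norm_sum_single hp _ s

lemma sum_norm_blockProj_rpow_le (hp : 0 < p.toReal) {N : ℕ → ℕ} (hN : Monotone N)
    (w : ℓ[p]) (s : Finset ℕ) :
    ∑ j ∈ s, ‖blockProj p (Finset.Ico (N j) (N (j + 1))) w‖ ^ p.toReal ≤ ‖w‖ ^ p.toReal := by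
  have hdisj : Set.PairwiseDisjoint (s : Set ℕ) fun j => Finset.Ico (N j) (N (j + 1)) := by
    intro i _ j _ hij
    refine Finset.disjoint_left.mpr fun k hki hkj => ?_
    simp only [Finset.mem_Ico] at hki hkj
    rcases hij.lt_or_gt with h | h
    · have := hN (show i + 1 ≤ j by omega); omega
    · have := hN (show j + 1 ≤ i by omega); omega
  simp_rw [norm_blockProj_rpow hp]
  rw [← Finset.sum_biUnion hdisj]
  exact lp.sum_rpow_le_norm_rpow hp w _

lemma exists_gliding_hump (hp : 0 < p.toReal) {ξ : ℕ → ℓ[p]}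
    (hξ : ∀ k, Tendsto (fun n => ξ n k) atTop (𝓝 0)) {ε : ℝ} (hε : 0 < ε) :
    ∃ ψ N : ℕ → ℕ, Monotone N ∧ ∀ j, ‖ξ (ψ j)‖ ^ p.toReal - ε ≤
      ‖blockProj p (Finset.Ico (N j) (N (j + 1))) (ξ (ψ j))‖ ^ p.toReal := by
  -- Far enough out, `ξ n` has negligible mass on `[0, M₀)`; a long enough block `[M₀, M)` then
  -- carries almost all of `‖ξ n‖ ^ p`.
  have step : ∀ M₀, ∃ n M, M₀ ≤ M ∧
      ‖ξ n‖ ^ p.toReal - ε ≤ ∑ k ∈ Finset.Ico M₀ M, ‖ξ n k‖ ^ p.toReal := by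
    intro M₀
    have hhead : Tendsto (fun n => ∑ k ∈ Finset.range M₀, ‖ξ n k‖ ^ p.toReal) atTop (𝓝 0) := by
      simpa [Real.zero_rpow hp.ne'] using tendsto_finsetSum (Finset.range M₀) fun k _ =>
        (hξ k).norm.rpow_const (p := p.toReal) (Or.inr hp.le)
    obtain ⟨n, hn⟩ := (hhead.eventually_lt_const (half_pos hε)).exists
    obtain ⟨M, hM, hM₀⟩ := (((lp.hasSum_norm hp (ξ n)).tendsto_sum_nat.eventually_const_lt
      (sub_lt_self _ (half_pos hε))).and (eventually_ge_atTop M₀)).exists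
    refine ⟨n, M, hM₀, ?_⟩
    rw [Finset.sum_Ico_eq_sub _ hM₀]
    linarith
  choose n M hM hnM using step
  refine ⟨fun j => n (M^[j] 0), fun j => M^[j] 0, monotone_nat_of_le_succ fun j => ?_, fun j => ?_⟩
  · rw [Function.iterate_succ_apply']
    exact hM _
  · rw [norm_blockProj_rpow hp]
    beta_reduce
    rw [Function.iterate_succ_apply']
    exact hnM _

lemma exists_block_functionals (hp : p ≠ ⊤) {ξ : ℕ → ℓ[p]}
    (hξ : ∀ k, Tendsto (fun n => ξ n k) atTop (𝓝 0)) {δ : ℝ} (hδ : 0 < δ)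
    (hξδ : ∀ n, δ ≤ ‖ξ n‖) {κ : ℝ} (hκ : 0 < κ) :
    ∃ (ψ : ℕ → ℕ) (f : ℕ → StrongDual ℝ ℓ[p]),
      (∀ w (s : Finset ℕ), ∑ j ∈ s, |f j w| ^ p.toReal ≤ ‖w‖ ^ p.toReal) ∧
      (∀ j, δ / 2 ≤ f j (ξ (ψ j))) ∧
      (∀ i (s : Finset ℕ), i ∉ s → ∑ j ∈ s, |f j (ξ (ψ i))| ^ p.toReal ≤ κ ^ p.toReal) := by
  have hp₀ : 0 < p.toReal :=
    ENNReal.toReal_pos (zero_lt_one.trans_le (Fact.out : 1 ≤ p)).ne' hp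
  have hslack : 0 < δ ^ p.toReal - (δ / 2) ^ p.toReal :=
    sub_pos.mpr (Real.rpow_lt_rpow (by positivity) (half_lt_self hδ) hp₀)
  obtain ⟨ψ, N, hN, hhump⟩ := exists_gliding_hump hp₀ hξ
    (ε := min (κ ^ p.toReal) (δ ^ p.toReal - (δ / 2) ^ p.toReal)) (lt_min (by positivity) hslack)
  set r := p.toReal
  set P : ℕ → ℓ[p] →L[ℝ] ℓ[p] := fun j => blockProj p (Finset.Ico (N j) (N (j + 1)))
  replace hhump : ∀ j, ‖ξ (ψ j)‖ ^ r - min (κ ^ r) (δ ^ r - (δ / 2) ^ r) ≤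
      ‖P j (ξ (ψ j))‖ ^ r := hhump
  -- `g j` norms the `j`-th block of `ξ (ψ j)`; the hump leaves less than `κ ^ r` of
  -- `‖ξ (ψ i)‖ ^ r` for the blocks `j ≠ i`.
  choose g hg hgξ using fun j => exists_dual_vector'' ℝ (P j (ξ (ψ j)))
  have hgP : ∀ w (s : Finset ℕ), ∑ j ∈ s, |g j (P j w)| ^ r ≤ ∑ j ∈ s, ‖P j w‖ ^ r :=
    fun w s => Finset.sum_le_sum fun j _ => Real.rpow_le_rpow (abs_nonneg _)
      (by simpa using (g j).le_of_opNorm_le (hg j) (P j w)) hp₀.le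
  refine ⟨ψ, fun j => (g j).comp (P j), fun w s => ?_, fun j => ?_, fun i s hi => ?_⟩
  · exact (hgP w s).trans (sum_norm_blockProj_rpow_le hp₀ hN w s)
  · have hP : (δ / 2) ^ r ≤ ‖P j (ξ (ψ j))‖ ^ r := by
      have := Real.rpow_le_rpow hδ.le (hξδ (ψ j)) hp₀.le
      linarith [hhump j, min_le_right (κ ^ r) (δ ^ r - (δ / 2) ^ r)]
    simpa [hgξ j] using (Real.rpow_le_rpow_iff (by positivity) (norm_nonneg _) hp₀).mp hP
  · calc ∑ j ∈ s, |g j (P j (ξ (ψ i)))| ^ r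
        ≤ ∑ j ∈ insert i s, ‖P j (ξ (ψ i))‖ ^ r - ‖P i (ξ (ψ i))‖ ^ r := by
          rw [Finset.sum_insert hi, add_sub_cancel_left]
          exact hgP _ s
      _ ≤ ‖ξ (ψ i)‖ ^ r - ‖P i (ξ (ψ i))‖ ^ r := by
          gcongr
          exact sum_norm_blockProj_rpow_le hp₀ hN _ _
      _ ≤ κ ^ r := by linarith [hhump i, min_le_left (κ ^ r) (δ ^ r - (δ / 2) ^ r)]

end LpBlocks

theorem exists_signed_bilinear_lp {p q : ℝ≥0∞} [Fact (1 ≤ p)] [Fact (1 ≤ q)]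
    (hp : 1 < p.toReal) (hq : q ≠ ⊤) (hpq : 1 ≤ 1 / p.toReal + 1 / q.toReal)
    {ξ : ℕ → ℓ[p]} {η : ℕ → ℓ[q]} (hξ : WeaklyNullSeq ξ) (hη : WeaklyNullSeq η)
    {δ δ' : ℝ} (hδ : 0 < δ) (hδ' : 0 < δ') (hξδ : ∀ n, δ ≤ ‖ξ n‖) (hηδ : ∀ n, δ' ≤ ‖η n‖) :
    ∃ (ψ ψ' : ℕ → ℕ) (ρ : ℝ), 0 < ρ ∧ ∀ sg : ℕ → ℝ, (∀ t, |sg t| = 1) →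
      ∃ B : ℓ[p] →L[ℝ] ℓ[q] →L[ℝ] ℝ, ∀ j, ρ ≤ sg j * B (ξ (ψ j)) (η (ψ' j)) := by
  have hp' : p ≠ ⊤ := by
    rintro rfl
    norm_num at hp
  have hq₀ : 0 < q.toReal :=
    ENNReal.toReal_pos (zero_lt_one.trans_le (Fact.out : 1 ≤ q)).ne' hq
  obtain ⟨C, hC⟩ := hη.exists_norm_le
  have hC₀ : 0 < C := hδ'.trans_le ((hηδ 0).trans (hC 0))
  obtain ⟨ψ', g, hg, hgη, -⟩ :=
    exists_block_functionals hq hη.tendsto_lp_apply hδ' hηδ one_pos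
  set ρ := δ / 2 * (δ' / 2)
  -- `κ` is chosen so that the off-diagonal part of the form, at most `κ * C`, is `ρ / 2`.
  obtain ⟨ψ, f, hf, hfξ, hfoff⟩ :=
    exists_block_functionals hp' hξ.tendsto_lp_apply hδ hξδ (κ := ρ / (2 * C)) (by positivity)
  have holder : ∀ (s : Finset ℕ) x y {A D : ℝ}, 0 ≤ A → 0 ≤ D →
      ∑ j ∈ s, |f j x| ^ p.toReal ≤ A ^ p.toReal → ∑ j ∈ s, |g j y| ^ q.toReal ≤ D ^ q.toReal →
      ∑ j ∈ s, |f j x| * |g j y| ≤ A * D := fun s _ _ _ _ hA hD =>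
    Real.sum_mul_le_of_sum_rpow_le s hp hq₀ hpq (fun _ _ => abs_nonneg _)
      (fun _ _ => abs_nonneg _) hA hD
  refine ⟨ψ, ψ', ρ / 2, by positivity, fun sg hsg => ?_⟩
  obtain ⟨B, hB⟩ := exists_bilinear_hasSum_mul (fun j => sg j • f j) g (C := 1) fun x y s => by
    simpa [abs_mul, hsg, mul_assoc] using
      holder s x y (norm_nonneg x) (norm_nonneg y) (hf x s) (hg y s)
  refine ⟨B, fun j => ?_⟩
  set β := f j (ξ (ψ j)) * g j (η (ψ' j))
  have hβ : ρ ≤ β :=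
    mul_le_mul (hfξ j) (hgη j) (by positivity) ((by positivity : (0 : ℝ) ≤ δ / 2).trans (hfξ j))
  have herr : |B (ξ (ψ j)) (η (ψ' j)) - sg j * β| ≤ ρ / (2 * C) * C := by
    simpa [β, mul_assoc] using (hB (ξ (ψ j)) (η (ψ' j))).abs_sub_le j fun s hs => by
      simpa [abs_mul, hsg] using holder s _ _ (by positivity) hC₀.le (hfoff j s hs)
        ((hg _ s).trans (Real.rpow_le_rpow (norm_nonneg _) (hC _) hq₀.le))
  have hsg2 : sg j * sg j = 1 := by rw [← abs_mul_abs_self, hsg, one_mul]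
  have hsg_err : -(ρ / 2) ≤ sg j * (B (ξ (ψ j)) (η (ψ' j)) - sg j * β) := by
    have := neg_abs_le (sg j * (B (ξ (ψ j)) (η (ψ' j)) - sg j * β))
    rw [abs_mul, hsg, one_mul] at this
    have : ρ / (2 * C) * C = ρ / 2 := by field_simp
    linarith
  linear_combination hsg_err + hβ - β * hsg2

lemma PropR.exists_weaklyNull_lp {p : ℝ≥0∞} [Fact (1 ≤ p)] {X : Type*} [NormedAddCommGroup X]
    [NormedSpace ℝ X] [CompleteSpace X] (hX : PropR p X) {W : Set X}
    (hW : ¬ RelNormCompact X W) (hWP : WeaklyPrecompact W) :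
    ∃ (u : X →L[ℝ] ℓ[p]) (a b : ℕ → X) (δ : ℝ), (∀ n, a n ∈ W) ∧ (∀ n, b n ∈ W) ∧ 0 < δ ∧
      WeaklyNullSeq (fun n => u (a n - b n)) ∧ ∀ n, δ ≤ ‖u (a n - b n)‖ := by
  obtain ⟨ε, hε, x, hxW, hsep⟩ := exists_separated_seq_of_not_isCompact_closure hW
  obtain ⟨φ, hφ, hxφ⟩ := hWP x hxW
  have hodd : StrictMono fun n : ℕ => 2 * n + 1 := fun _ _ h => by simp only; omega
  have heven : StrictMono fun n : ℕ => 2 * n := fun _ _ h => by simp only; omega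
  set z := x ∘ φ ∘ (fun n => 2 * n + 1) - x ∘ φ ∘ (fun n => 2 * n)
  have hz : WeaklyNullSeq z :=
    hxφ.weaklyNullSeq_sub hodd.tendsto_atTop heven.tendsto_atTop
  have hzε : ∀ n, ε ≤ ‖z n‖ := fun n => by
    simpa [z, dist_eq_norm, norm_sub_rev] using hsep _ _ (hφ (by omega : 2 * n < 2 * n + 1))
  obtain ⟨u, hu⟩ := hX _ hz.relWeakCompact_range (hz.not_relNormCompact_range hε hzε)
  rw [← Set.range_comp] at hu
  obtain ⟨δ, hδ, φ', hφ', huz⟩ := exists_strictMono_le_norm_of_not_relNormCompact_range hu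
  exact ⟨u, fun n => x (φ (2 * φ' n + 1)), fun n => x (φ (2 * φ' n)), δ, fun _ => hxW _,
    fun _ => hxW _, hδ, (hz.map u).comp_tendsto hφ'.tendsto_atTop, huz⟩

theorem stmt14_general (p q : ℝ≥0∞) [Fact (1 ≤ p)] [Fact (1 ≤ q)]
    (hp : 1 < p) (hp' : p ≠ ⊤) (hq' : q ≠ ⊤) (hpq : 1 ≤ 1 / p + 1 / q)
    {X Y Z : Type*} [NormedAddCommGroup X] [NormedSpace ℝ X] [CompleteSpace X] [NormedAddCommGroup Y] [NormedSpace ℝ Y] [CompleteSpace Y] [NormedAddCommGroup Z] [NormedSpace ℝ Z]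
    (hX : PropR p X) (hY : PropR q Y)
    (m : X →L[ℝ] Y →L[ℝ] Z) (hm : IsProjTensorProduct X Y Z m)
    (W1 : Set X) (W2 : Set Y)
    (h : WeaklyPrecompact (Set.image2 (fun x y => m x y) W1 W2)) :
    RelNormCompact X W1 ∨ RelNormCompact Y W2 := by
  by_contra! hW
  obtain ⟨x₀, hx₀, hx₀'⟩ := exists_mem_ne_zero_of_not_relNormCompact hW.1
  obtain ⟨y₀, hy₀, hy₀'⟩ := exists_mem_ne_zero_of_not_relNormCompact hW.2
  have hW₂ : WeaklyPrecompact (Set.image2 (fun y x => m.flip y x) W2 W1) := by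
    rwa [Set.image2_swap]
  obtain ⟨u, a, b, δ, ha, hb, hδ, hξ, hξδ⟩ :=
    hX.exists_weaklyNull_lp hW.1 (hm.weaklyPrecompact_left h hy₀ hy₀')
  obtain ⟨v, c, d, δ', hc, hd, hδ', hη, hηδ⟩ :=
    hY.exists_weaklyNull_lp hW.2 (hm.flip.weaklyPrecompact_left hW₂ hx₀ hx₀')
  obtain ⟨ψ, ψ', ρ, hρ, hB⟩ := exists_signed_bilinear_lp
    (by simpa using ENNReal.toReal_strict_mono hp' hp) hq'
    (ENNReal.one_le_inv_add_inv_toReal (zero_lt_one.trans hp).ne'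
      (zero_lt_one.trans_le Fact.out).ne' hpq) hξ hη hδ hδ' hξδ hηδ
  obtain ⟨σ, hσ, hζ⟩ := h.image2_sub_sub (fun j => m (a (ψ j) - b (ψ j)) (c (ψ' j) - d (ψ' j)))
    fun j => Set.mem_image2_of_mem (Set.sub_mem_sub (ha _) (hb _)) (Set.sub_mem_sub (hc _) (hd _))
  -- The signs alternate along the weakly Cauchy subsequence `σ`.
  obtain ⟨B, hBσ⟩ := hB (fun t => (-1) ^ Function.invFun σ t) fun t => by simp
  obtain ⟨T, -, hT⟩ := hm.lift ℝ (B.bilinearComp u v)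
  obtain ⟨l, hl⟩ := hζ T
  refine not_tendsto_of_le_neg_one_pow_mul hρ (fun i => ?_) l hl
  simpa [hT, Function.leftInverse_invFun hσ.injective i] using hBσ (σ i)

theorem stmt14 (p q : ℝ≥0∞) [Fact (1 ≤ p)] [Fact (1 ≤ q)]
    (hp : 1 < p) (hp' : p ≠ ⊤) (hq : 1 < q) (hq' : q ≠ ⊤) (hpq : 1 ≤ 1 / p + 1 / q)
    {X Y Z : Type*} [NormedAddCommGroup X] [NormedSpace ℝ X] [CompleteSpace X] [NormedAddCommGroup Y] [NormedSpace ℝ Y] [CompleteSpace Y] [NormedAddCommGroup Z] [NormedSpace ℝ Z] [CompleteSpace Z]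
    (hX : PropR p X) (hY : PropR q Y)
    (m : X →L[ℝ] Y →L[ℝ] Z) (hm : IsProjTensorProduct X Y Z m)
    (W1 : Set X) (W2 : Set Y)
    (h : WeaklyPrecompact (Set.image2 (fun x y => m x y) W1 W2)) :
    RelNormCompact X W1 ∨ RelNormCompact Y W2 :=
  stmt14_general p q hp hp' hq' hpq hX hY m hm W1 W2 h
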